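/- arXiv:1912.01270 — 2 statements merged into one kernel-verified Lean document; each statement's English description precedes it below -/
import Mathlib

section
/- Let ρ_QC = Σ_{j∈{0,1}} p_j φ_j ⊗ |j⟩⟨j| be a two-qubit quantum-classical state. For any qubit POVMs {M_{x1|x0}} for Alice and {M_{b|y}} for Bob, the witness Q computed from p(b|x1;x0,y) = Tr((M_{x1|x0}⊗M_{b|y})ρ_QC)/Tr((M_{x1|x0}⊗I)ρ_QC) equals 0. -/
open Matrix Kronecker ComplexOrder

/-- Rank-one projector |v⟩⟨v| on ℂ². -/
def proj (v : Fin 2 → ℂ) : Matrix (Fin 2) (Fin 2) ℂ :=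
  fun k l => v k * star (v l)

/-- The witness Q = |det M| with M_{y,x0} = p(0|0;x0,y) − p(0|1;x0,y),
    where `pc b x1 x0 y` denotes p(b|x1;x0,y). -/
noncomputable def Qwitness (pc : Fin 2 → Fin 2 → Fin 2 → Fin 2 → ℝ) : ℝ :=
  |(pc 0 0 0 0 - pc 0 1 0 0) * (pc 0 0 1 1 - pc 0 1 1 1) -
    (pc 0 0 1 0 - pc 0 1 1 0) * (pc 0 0 0 1 - pc 0 1 0 1)|

/-!
For Hermitian `A`, `B`, `φⱼ`, `σⱼ` and `ρ = ∑ⱼ pⱼ φⱼ ⊗ σⱼ`, `Re Tr((A ⊗ B) ρ) = α ⬝ᵥ β` with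
`αⱼ = pⱼ Tr(A φⱼ)` and `βⱼ = Tr(B σⱼ)` real. Each conditional probability is therefore a ratio
`(α ⬝ᵥ β) / (α ⬝ᵥ τ)`, `τ` being the `β` of `B = 1`. With two terms, the difference of two such
ratios sharing `β` and `τ` is `det(β, τ) · det(α, α') / ((α ⬝ᵥ τ)(α' ⬝ᵥ τ))`, so the matrix
`M_{y,x₀}` whose determinant is `Q` factors as `u(y) w(x₀)` and has rank one.
-/

lemma proj_isHermitian (v : Fin 2 → ℂ) : (proj v).IsHermitian :=
  (posSemidef_vecMulVec_self_star v).isHermitian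

lemma Matrix.IsHermitian.im_trace_mul {n : Type*} [Fintype n] {X Y : Matrix n n ℂ}
    (hX : X.IsHermitian) (hY : Y.IsHermitian) : (trace (X * Y)).im = 0 := by
  refine Complex.conj_eq_iff_im.mp ?_
  rw [← Complex.star_def, ← trace_conjTranspose, conjTranspose_mul, hX.eq, hY.eq, trace_mul_comm]

lemma Matrix.trace_kronecker_mul_sum_smul_kronecker {R m n ι : Type*} [CommSemiring R]
    [Fintype m] [Fintype n] [Fintype ι] (A : Matrix m m R) (B : Matrix n n R) (c : ι → R)
    (φ : ι → Matrix m m R) (σ : ι → Matrix n n R) :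
    trace ((A ⊗ₖ B) * ∑ j, c j • (φ j ⊗ₖ σ j)) =
      ∑ j, c j * (trace (A * φ j) * trace (B * σ j)) := by
  rw [Finset.mul_sum, trace_sum]
  simp only [Matrix.mul_smul, trace_smul, ← mul_kronecker_mul, trace_kronecker, smul_eq_mul]

lemma Matrix.re_trace_kronecker_mul_sum_smul_kronecker {m n ι : Type*}
    [Fintype m] [Fintype n] [Fintype ι] {A : Matrix m m ℂ} {B : Matrix n n ℂ} (p : ι → ℝ)
    {φ : ι → Matrix m m ℂ} {σ : ι → Matrix n n ℂ} (hA : A.IsHermitian) (hB : B.IsHermitian)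
    (hφ : ∀ j, (φ j).IsHermitian) (hσ : ∀ j, (σ j).IsHermitian) :
    (trace ((A ⊗ₖ B) * ∑ j, (p j : ℂ) • (φ j ⊗ₖ σ j))).re =
      ∑ j, p j * (trace (A * φ j)).re * (trace (B * σ j)).re := by
  rw [trace_kronecker_mul_sum_smul_kronecker, Complex.re_sum]
  refine Finset.sum_congr rfl fun j _ => ?_
  rw [Complex.re_ofReal_mul, Complex.mul_re, hA.im_trace_mul (hφ j),
    hB.im_trace_mul (hσ j), mul_zero, sub_zero, mul_assoc]

lemma dotProduct_div_sub_dotProduct_div {K : Type*} [Field K] {α α' τ : Fin 2 → K}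
    (β : Fin 2 → K) (hα : α ⬝ᵥ τ ≠ 0) (hα' : α' ⬝ᵥ τ ≠ 0) :
    (α ⬝ᵥ β) / (α ⬝ᵥ τ) - (α' ⬝ᵥ β) / (α' ⬝ᵥ τ) =
      (of ![β, τ]).det * ((of ![α, α']).det / ((α ⬝ᵥ τ) * (α' ⬝ᵥ τ))) := by
  rw [div_sub_div _ _ hα hα', mul_div_assoc']
  congr 1
  simp only [dotProduct, Fin.sum_univ_two, det_fin_two, of_apply, cons_val_zero, cons_val_one]
  ring

lemma Qwitness_eq_zero_of_sub_eq_mul (pc : Fin 2 → Fin 2 → Fin 2 → Fin 2 → ℝ)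
    (w u : Fin 2 → ℝ) (h : ∀ x0 y, pc 0 0 x0 y - pc 0 1 x0 y = w x0 * u y) :
    Qwitness pc = 0 := by
  rw [Qwitness, h, h, h, h, abs_eq_zero]
  ring

theorem qc_state_witness_vanishes_general
    (p : Fin 2 → ℝ)
    (v : Fin 2 → Fin 2 → ℂ)
    (φ : Fin 2 → Matrix (Fin 2) (Fin 2) ℂ)
    (hφpsd : ∀ i, (φ i).PosSemidef)
    (ρQC : Matrix (Fin 2 × Fin 2) (Fin 2 × Fin 2) ℂ)
    (hρ : ρQC = ∑ j, (p j : ℂ) • (φ j ⊗ₖ proj (v j)))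
    (MA : Fin 2 → Fin 2 → Matrix (Fin 2) (Fin 2) ℂ)  -- MA x0 x1 = M_{x1|x0}
    (hMApsd : ∀ x0 x1, (MA x0 x1).PosSemidef)
    (MB : Fin 2 → Fin 2 → Matrix (Fin 2) (Fin 2) ℂ)  -- MB y b = M_{b|y}
    (hMBpsd : ∀ y b, (MB y b).PosSemidef)
    (hden : ∀ x0 x1, (Matrix.trace ((MA x0 x1 ⊗ₖ (1 : Matrix (Fin 2) (Fin 2) ℂ)) * ρQC)).re ≠ 0)
    (pc : Fin 2 → Fin 2 → Fin 2 → Fin 2 → ℝ)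
    (hpc : ∀ b x1 x0 y, pc b x1 x0 y =
      (Matrix.trace ((MA x0 x1 ⊗ₖ MB y b) * ρQC)).re /
        (Matrix.trace ((MA x0 x1 ⊗ₖ (1 : Matrix (Fin 2) (Fin 2) ℂ)) * ρQC)).re) :
    Qwitness pc = 0 := by
  set α : Fin 2 → Fin 2 → Fin 2 → ℝ := fun x0 x1 j => p j * (trace (MA x0 x1 * φ j)).re
  set β : Matrix (Fin 2) (Fin 2) ℂ → Fin 2 → ℝ := fun B j => (trace (B * proj (v j))).re
  have hprob : ∀ x0 x1 B, B.IsHermitian →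
      (trace ((MA x0 x1 ⊗ₖ B) * ρQC)).re = α x0 x1 ⬝ᵥ β B := fun x0 x1 B hB => by
    rw [hρ, re_trace_kronecker_mul_sum_smul_kronecker p (hMApsd x0 x1).isHermitian hB
      (fun j => (hφpsd j).isHermitian) (fun j => proj_isHermitian (v j))]
    rfl
  have hden' : ∀ x0 x1, α x0 x1 ⬝ᵥ β 1 ≠ 0 := fun x0 x1 =>
    hprob x0 x1 1 isHermitian_one ▸ hden x0 x1
  refine Qwitness_eq_zero_of_sub_eq_mul pc
    (fun x0 => (of ![α x0 0, α x0 1]).det / ((α x0 0 ⬝ᵥ β 1) * (α x0 1 ⬝ᵥ β 1)))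
    (fun y => (of ![β (MB y 0), β 1]).det) fun x0 y => ?_
  simp only [hpc, hprob _ _ _ (hMBpsd y 0).isHermitian, hprob _ _ _ isHermitian_one]
  rw [dotProduct_div_sub_dotProduct_div _ (hden' x0 0) (hden' x0 1), mul_comm]

theorem qc_state_witness_vanishes
    (p : Fin 2 → ℝ) (hp : ∀ i, 0 ≤ p i) (hp1 : p 0 + p 1 = 1)
    (v : Fin 2 → Fin 2 → ℂ)
    (hortho : ∀ i j, ∑ k, star (v i k) * v j k = if i = j then 1 else 0)
    (φ : Fin 2 → Matrix (Fin 2) (Fin 2) ℂ)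
    (hφpsd : ∀ i, (φ i).PosSemidef) (hφtr : ∀ i, Matrix.trace (φ i) = 1)
    (ρQC : Matrix (Fin 2 × Fin 2) (Fin 2 × Fin 2) ℂ)
    (hρ : ρQC = ∑ j, (p j : ℂ) • (φ j ⊗ₖ proj (v j)))
    (MA : Fin 2 → Fin 2 → Matrix (Fin 2) (Fin 2) ℂ)  -- MA x0 x1 = M_{x1|x0}
    (hMApsd : ∀ x0 x1, (MA x0 x1).PosSemidef)
    (hMAsum : ∀ x0, MA x0 0 + MA x0 1 = 1)
    (MB : Fin 2 → Fin 2 → Matrix (Fin 2) (Fin 2) ℂ)  -- MB y b = M_{b|y}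
    (hMBpsd : ∀ y b, (MB y b).PosSemidef)
    (hMBsum : ∀ y, MB y 0 + MB y 1 = 1)
    (hden : ∀ x0 x1, (Matrix.trace ((MA x0 x1 ⊗ₖ (1 : Matrix (Fin 2) (Fin 2) ℂ)) * ρQC)).re ≠ 0)
    (pc : Fin 2 → Fin 2 → Fin 2 → Fin 2 → ℝ)
    (hpc : ∀ b x1 x0 y, pc b x1 x0 y =
      (Matrix.trace ((MA x0 x1 ⊗ₖ MB y b) * ρQC)).re /
        (Matrix.trace ((MA x0 x1 ⊗ₖ (1 : Matrix (Fin 2) (Fin 2) ℂ)) * ρQC)).re) :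
    Qwitness pc = 0 :=
  qc_state_witness_vanishes_general p v φ hφpsd ρQC hρ MA hMApsd MB hMBpsd hden pc hpc
end

section
/- For a two-qubit state in canonical form with maximally mixed marginal on Alice's side (a = 0) and measurements û_0 = x̂, û_1 = ŷ for Alice, T_0 = x̂, T_1 = ŷ for Bob, the witness Q equals |c_1 c_2|; hence Q > 0 if and only if both c_1 ≠ 0 and c_2 ≠ 0. -/
open Matrix Kronecker

/-- The Pauli matrices σ₁ = σ_x, σ₂ = σ_y, σ₃ = σ_z. -/
noncomputable def pauli : Fin 3 → Matrix (Fin 2) (Fin 2) ℂ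
  | 0 => !![0, 1; 1, 0]
  | 1 => !![0, -Complex.I; Complex.I, 0]
  | 2 => !![1, 0; 0, -1]

/-- v·σ for a real vector v. -/
noncomputable def blochOp (v : Fin 3 → ℝ) : Matrix (Fin 2) (Fin 2) ℂ :=
  ∑ i, (v i : ℂ) • pauli i

/-- The canonical two-qubit state
    ζ = (1/4)(I⊗I + a·σ⊗I + I⊗b·σ + Σᵢ cᵢ σᵢ⊗σᵢ). -/
noncomputable def zeta (a b c : Fin 3 → ℝ) : Matrix (Fin 2 × Fin 2) (Fin 2 × Fin 2) ℂ :=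
  (1/4 : ℂ) • ((1 : Matrix (Fin 2) (Fin 2) ℂ) ⊗ₖ (1 : Matrix (Fin 2) (Fin 2) ℂ)
    + blochOp a ⊗ₖ (1 : Matrix (Fin 2) (Fin 2) ℂ)
    + (1 : Matrix (Fin 2) (Fin 2) ℂ) ⊗ₖ blochOp b
    + ∑ i, (c i : ℂ) • (pauli i ⊗ₖ pauli i))

/-- Alice's projective measurement operators M_{x1|x0} = (I + (−1)^{x1} û_{x0}·σ)/2. -/
noncomputable def measOp (u : Fin 2 → Fin 3 → ℝ) (x0 x1 : Fin 2) :
    Matrix (Fin 2) (Fin 2) ℂ :=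
  (1/2 : ℂ) • ((1 : Matrix (Fin 2) (Fin 2) ℂ) + ((-1 : ℂ) ^ (x1 : ℕ)) • blochOp (u x0))

/-- Conditional probability p(b|x1;x0,y) = Tr((M_{x1|x0}⊗M_{b|y})ζ)/Tr((M_{x1|x0}⊗I)ζ). -/
noncomputable def pcond (ρ : Matrix (Fin 2 × Fin 2) (Fin 2 × Fin 2) ℂ)
    (u T : Fin 2 → Fin 3 → ℝ) (b x1 x0 y : Fin 2) : ℝ :=
  (Matrix.trace ((measOp u x0 x1 ⊗ₖ measOp T y b) * ρ)).re /
    (Matrix.trace ((measOp u x0 x1 ⊗ₖ (1 : Matrix (Fin 2) (Fin 2) ℂ)) * ρ)).re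

/-- Measurement directions û_0 = x̂, û_1 = ŷ. -/
def dirXY : Fin 2 → Fin 3 → ℝ
  | 0 => ![1, 0, 0]
  | 1 => ![0, 1, 0]

/- With `a = 0` Alice's marginal is `I/2`: since `Tr σᵢ = 0` and `Tr (σᵢσⱼ) = 2δᵢⱼ`, every
`Tr ((P ⊗ Q) ζ)` is read off from the Bloch vectors of `P` and `Q`, and the conditional
probabilities become `½ (1 + (-1)ʳ b·T_y + (-1)^(x₁+r) Σᵢ cᵢ u_{x₀,i} T_{y,i})`. The entries of the
matrix whose determinant is `Q` are thus the correlations `Σᵢ cᵢ u_{x₀,i} T_{y,i}`, and for the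
directions `x̂, ŷ` on both sides that matrix is `diag(c₁, c₂)`. -/

theorem trace_pauli (i : Fin 3) : trace (pauli i) = 0 := by
  fin_cases i <;> simp [pauli, trace_fin_two]

theorem trace_pauli_mul_pauli (i j : Fin 3) :
    trace (pauli i * pauli j) = if i = j then 2 else 0 := by
  fin_cases i <;> fin_cases j <;> simp [pauli, trace_fin_two] <;> norm_num

theorem trace_blochOp (v : Fin 3 → ℝ) : trace (blochOp v) = 0 := by
  simp [blochOp, trace_sum, trace_pauli]

theorem trace_blochOp_mul_pauli (v : Fin 3 → ℝ) (i : Fin 3) :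
    trace (blochOp v * pauli i) = 2 * v i := by
  simp [blochOp, Finset.sum_mul, trace_sum, trace_pauli_mul_pauli, mul_comm]

theorem trace_measOp (u : Fin 2 → Fin 3 → ℝ) (x0 x1 : Fin 2) : trace (measOp u x0 x1) = 1 := by
  simp [measOp, trace_blochOp, trace_one]

theorem trace_measOp_mul_pauli (u : Fin 2 → Fin 3 → ℝ) (x0 x1 : Fin 2) (i : Fin 3) :
    trace (measOp u x0 x1 * pauli i) = (-1) ^ (x1 : ℕ) * u x0 i := by
  simp [measOp, add_mul, trace_pauli, trace_blochOp_mul_pauli]; ring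

theorem trace_measOp_mul_blochOp (u : Fin 2 → Fin 3 → ℝ) (x0 x1 : Fin 2) (v : Fin 3 → ℝ) :
    trace (measOp u x0 x1 * blochOp v) = (-1) ^ (x1 : ℕ) * ∑ i, v i * u x0 i := by
  simp [blochOp, Finset.mul_sum, trace_sum, trace_measOp_mul_pauli, mul_left_comm]

theorem trace_kronecker_mul_kronecker {m n α : Type*} [Fintype m] [Fintype n] [CommSemiring α]
    (A B : Matrix m m α) (C D : Matrix n n α) :
    trace ((A ⊗ₖ C) * (B ⊗ₖ D)) = trace (A * B) * trace (C * D) := by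
  rw [← mul_kronecker_mul, trace_kronecker]

theorem trace_kronecker_mul_zeta (a b c : Fin 3 → ℝ) (P Q : Matrix (Fin 2) (Fin 2) ℂ) :
    trace ((P ⊗ₖ Q) * zeta a b c) = (1 / 4) * (trace P * trace Q
      + trace (P * blochOp a) * trace Q + trace P * trace (Q * blochOp b)
      + ∑ i, c i * (trace (P * pauli i) * trace (Q * pauli i))) := by
  simp only [zeta, mul_smul_comm, mul_add, Finset.mul_sum, trace_smul, trace_add, trace_sum,
    trace_kronecker_mul_kronecker, mul_one, smul_eq_mul]

theorem trace_measOp_kronecker_measOp_mul_zeta (a b c : Fin 3 → ℝ) (u T : Fin 2 → Fin 3 → ℝ)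
    (r x1 x0 y : Fin 2) :
    trace ((measOp u x0 x1 ⊗ₖ measOp T y r) * zeta a b c) =
      ((1 / 4 * (1 + (-1) ^ (x1 : ℕ) * ∑ i, a i * u x0 i + (-1) ^ (r : ℕ) * ∑ i, b i * T y i
        + (-1) ^ (x1 : ℕ) * (-1) ^ (r : ℕ) * ∑ i, c i * u x0 i * T y i) : ℝ) : ℂ) := by
  rw [trace_kronecker_mul_zeta]
  simp only [trace_measOp, trace_measOp_mul_blochOp, trace_measOp_mul_pauli]
  push_cast
  simp only [Finset.mul_sum]
  ring_nf

theorem trace_measOp_kronecker_one_mul_zeta (a b c : Fin 3 → ℝ) (u : Fin 2 → Fin 3 → ℝ)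
    (x1 x0 : Fin 2) :
    trace ((measOp u x0 x1 ⊗ₖ (1 : Matrix (Fin 2) (Fin 2) ℂ)) * zeta a b c) =
      ((1 / 2 * (1 + (-1) ^ (x1 : ℕ) * ∑ i, a i * u x0 i) : ℝ) : ℂ) := by
  rw [trace_kronecker_mul_zeta]
  simp only [trace_measOp, trace_measOp_mul_blochOp, one_mul, trace_one, Fintype.card_fin,
    trace_blochOp, trace_pauli, mul_zero, Finset.sum_const_zero, add_zero]
  push_cast
  ring

theorem pcond_zeta (a b c : Fin 3 → ℝ) (u T : Fin 2 → Fin 3 → ℝ) (r x1 x0 y : Fin 2) :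
    pcond (zeta a b c) u T r x1 x0 y =
      (1 + (-1) ^ (x1 : ℕ) * ∑ i, a i * u x0 i + (-1) ^ (r : ℕ) * ∑ i, b i * T y i
        + (-1) ^ (x1 : ℕ) * (-1) ^ (r : ℕ) * ∑ i, c i * u x0 i * T y i)
      / (2 * (1 + (-1) ^ (x1 : ℕ) * ∑ i, a i * u x0 i)) := by
  rw [pcond, trace_measOp_kronecker_measOp_mul_zeta, trace_measOp_kronecker_one_mul_zeta,
    Complex.ofReal_re, Complex.ofReal_re]
  field_simp
  ring

theorem pcond_zeta_zero_sub (b c : Fin 3 → ℝ) (u T : Fin 2 → Fin 3 → ℝ) (x0 y : Fin 2) :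
    pcond (zeta (fun _ => 0) b c) u T 0 0 x0 y - pcond (zeta (fun _ => 0) b c) u T 0 1 x0 y =
      ∑ i, c i * u x0 i * T y i := by
  simp only [pcond_zeta, zero_mul, Finset.sum_const_zero, mul_zero, add_zero]
  norm_num
  ring

theorem Qwitness_pcond_zeta_zero (b c : Fin 3 → ℝ) (u T : Fin 2 → Fin 3 → ℝ) :
    Qwitness (pcond (zeta (fun _ => 0) b c) u T) =
      |(∑ i, c i * u 0 i * T 0 i) * (∑ i, c i * u 1 i * T 1 i)
        - (∑ i, c i * u 1 i * T 0 i) * (∑ i, c i * u 0 i * T 1 i)| := by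
  simp only [Qwitness, pcond_zeta_zero_sub]

theorem maximally_mixed_marginal_witness (b c : Fin 3 → ℝ) :
    Qwitness (pcond (zeta (fun _ => 0) b c) dirXY dirXY) = |c 0 * c 1| ∧
    (0 < Qwitness (pcond (zeta (fun _ => 0) b c) dirXY dirXY) ↔ c 0 ≠ 0 ∧ c 1 ≠ 0) := by
  have hQ : Qwitness (pcond (zeta (fun _ => 0) b c) dirXY dirXY) = |c 0 * c 1| := by
    simp [Qwitness_pcond_zeta_zero, Fin.sum_univ_three, dirXY]
  rw [hQ, abs_pos, mul_ne_zero_iff]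
  exact ⟨rfl, Iff.rfl⟩
end
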